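/- For every positive integer n, the recurrence CP_n^{(k)}(x;λ,μ) = −μλ·CP_{n-1}^{(k)}(x−λ+1;λ,μ+1) − x·CP_{n-1}^{(k)}(x+1;λ,μ) + (1/n)·Σ_{l=0}^{n-1} C(n,l+1) Ĉ_{n-1-l} [CP_{l+1}^{(k-1)}(x;λ,μ) − CP_{l+1}^{(k)}(x;λ,μ)] holds, where Ĉ_m are the Cauchy numbers of the second kind defined by t/((1+t)log(1+t)) = Σ_{m≥0} Ĉ_m t^m/m!. -/

import Mathlib

open PowerSeries Finset

noncomputable section

/-- The formal power series log(1+t). -/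
def logS : PowerSeries ℝ :=
  PowerSeries.mk fun n => if n = 0 then 0 else (-1) ^ (n + 1) / n

/-- Composition of formal power series (valid when `g` has zero constant term). -/
def compS (f g : PowerSeries ℝ) : PowerSeries ℝ :=
  PowerSeries.mk fun n =>
    ∑ m ∈ Finset.range (n + 1), (PowerSeries.coeff (R := ℝ) m f) * PowerSeries.coeff (R := ℝ) n (g ^ m)

/-- The formal power series (1+t)^x = Σ (x)_n t^n / n!. -/
def onePow (x : ℝ) : PowerSeries ℝ :=
  PowerSeries.mk fun n => (descPochhammer ℝ n).eval x / n.factorial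

/-- The polylogarithm factorial function Lif_k(t) = Σ t^n/(n!(n+1)^k). -/
def Lif (k : ℤ) : PowerSeries ℝ :=
  PowerSeries.mk fun n => 1 / (n.factorial * ((n : ℝ) + 1) ^ k)

/-- The Peters factor (1+(1+t)^λ)^(-μ) = 2^(-μ) exp(-μ log(1 + ((1+t)^λ - 1)/2)). -/
def peters (lam mu : ℝ) : PowerSeries ℝ :=
  PowerSeries.C (R := ℝ) ((2 : ℝ) ^ (-mu)) *
    compS (PowerSeries.exp ℝ)
      (PowerSeries.C (R := ℝ) (-mu) * compS logS (PowerSeries.C (R := ℝ) (1 / 2) * (onePow lam - 1)))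

/-- The Peters polynomials S_n(x;λ,μ). -/
def petersPoly (lam mu x : ℝ) (n : ℕ) : ℝ :=
  n.factorial * PowerSeries.coeff (R := ℝ) n (peters lam mu * onePow x)

/-- Poly-Cauchy polynomials of the first kind C_n^{(k)}(x). -/
def pC (k : ℤ) (x : ℝ) (n : ℕ) : ℝ :=
  n.factorial * PowerSeries.coeff (R := ℝ) n (compS (Lif k) logS * onePow (-x))

/-- Poly-Cauchy polynomials of the second kind Ĉ_n^{(k)}(x). -/
def pChat (k : ℤ) (x : ℝ) (n : ℕ) : ℝ :=
  n.factorial * PowerSeries.coeff (R := ℝ) n (compS (Lif k) (-logS) * onePow x)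

/-- The poly-Cauchy of the first kind and Peters mixed-type polynomials CP_n^{(k)}(x;λ,μ). -/
def CP (k : ℤ) (lam mu x : ℝ) (n : ℕ) : ℝ :=
  n.factorial * PowerSeries.coeff (R := ℝ) n (peters lam mu * compS (Lif k) logS * onePow (-x))

/-- The poly-Cauchy of the second kind and Peters mixed-type polynomials ĈP_n^{(k)}(x;λ,μ). -/
def CPhat (k : ℤ) (lam mu x : ℝ) (n : ℕ) : ℝ :=
  n.factorial * PowerSeries.coeff (R := ℝ) n (peters lam mu * compS (Lif k) (-logS) * onePow x)

/-- Signed Stirling numbers of the first kind: (x)_n = Σ_l s(n,l) x^l. -/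
def stirS (n l : ℕ) : ℝ := (descPochhammer ℝ n).coeff l

/-- The Cauchy numbers of the second kind: t/((1+t)log(1+t)) = Σ Ĉ_m t^m/m!. -/
def cauchyHat (m : ℕ) : ℝ :=
  m.factorial *
    PowerSeries.coeff (R := ℝ) m
      (PowerSeries.mk fun j => PowerSeries.coeff (R := ℝ) (j + 1) ((1 + PowerSeries.X) * logS))⁻¹

/-!
Let `F(t)` be the generating function of `CP_n^{(k)}(x;λ,μ)`. The recurrence is the coefficient
form of a differential equation for `t F'(t)`, obtained from the product rule:
`(1+t)^{-x}` has derivative `-x (1+t)^{-x-1}`; the Peters factor `P_μ = (1+(1+t)^λ)^{-μ}` has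
derivative `-μλ (1+t)^{λ-1} P_{μ+1}`; and `t Lif_k'(t) = Lif_{k-1}(t) - Lif_k(t)` turns
`t (d/dt) Lif_k(log(1+t))` into `t/((1+t) log(1+t)) · (Lif_{k-1} - Lif_k)(log(1+t))`.
Taking the `n`-th coefficient, the last product becomes a binomial convolution with the Cauchy
numbers of the second kind.

Since `P_μ` is defined through `exp` and `log`, the relation `P_μ = (1+(1+t)^λ) P_{μ+1}` is not
built in: it follows from uniqueness for the linear equation `(1+(1+t)^λ) y' = -μλ (1+t)^{λ-1} y`,
which both sides satisfy.
-/

namespace PowerSeries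

theorem eq_of_mul_derivative_eq_mul {K : Type*} [Field K] [CharZero K] {A B Y Z : K⟦X⟧}
    (hA : A ≠ 0) (hZ : constantCoeff Z ≠ 0)
    (hY : A * d⁄dX K Y = B * Y) (hZ' : A * d⁄dX K Z = B * Z)
    (h0 : constantCoeff Y = constantCoeff Z) : Y = Z := by
  have hwronskian : d⁄dX K Y * Z = Y * d⁄dX K Z :=
    mul_left_cancel₀ hA (by linear_combination Z * hY - Y * hZ')
  have hinv : Z * Z⁻¹ = 1 := PowerSeries.mul_inv_cancel Z hZ
  have hquot : Y * Z⁻¹ = 1 := by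
    refine derivative.ext ?_ (by rw [map_mul, constantCoeff_inv, h0, map_one, mul_inv_cancel₀ hZ])
    rw [Derivation.leibniz, derivative_inv', derivative_one, smul_eq_mul, smul_eq_mul]
    linear_combination Z⁻¹ ^ 2 * hwronskian - Z⁻¹ * d⁄dX K Y * hinv
  calc Y = Y * Z⁻¹ * Z := by rw [mul_assoc, mul_comm Z⁻¹, hinv, mul_one]
    _ = Z := by rw [hquot, one_mul]

theorem derivative_C_mul {R : Type*} [CommSemiring R] (c : R) (f : R⟦X⟧) :
    d⁄dX R (C c * f) = C c * d⁄dX R f := by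
  rw [Derivation.leibniz, derivative_C, smul_zero, add_zero, smul_eq_mul]

section Subst

variable {A : Type*} [CommRing A]

theorem subst_one (u : A⟦X⟧) : (1 : A⟦X⟧).subst u = 1 := by
  simpa using subst_C (a := u) (1 : A)

theorem subst_X_mul {g : A⟦X⟧} (hg : constantCoeff g = 0) (f : A⟦X⟧) :
    (X * f).subst g = g * f.subst g := by
  have hs := HasSubst.of_constantCoeff_zero' hg
  rw [subst_mul hs, subst_X hs]

variable [Algebra ℚ A]

theorem one_add_X_mul_derivative_log : (1 + X) * d⁄dX A (log A) = 1 := by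
  ext (_ | n)
  · simp [deriv_log]
  · simp [deriv_log, add_mul, coeff_succ_X_mul, pow_succ]

theorem one_add_mul_subst_derivative_log {u : A⟦X⟧} (hu : constantCoeff u = 0) :
    (1 + u) * (d⁄dX A (log A)).subst u = 1 := by
  have hs := HasSubst.of_constantCoeff_zero' hu
  calc (1 + u) * (d⁄dX A (log A)).subst u = ((1 + X) * d⁄dX A (log A)).subst u := by
        rw [subst_mul hs, subst_add hs, subst_X hs, subst_one]
    _ = 1 := by rw [one_add_X_mul_derivative_log, subst_one]

theorem constantCoeff_C_mul_subst_log {u : A⟦X⟧} (hu : constantCoeff u = 0) (c : A) :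
    constantCoeff (C c * (log A).subst u) = 0 := by
  rw [map_mul, show constantCoeff ((log A).subst u) = 0 from
    constantCoeff_subst_eq_zero hu _ constantCoeff_log, mul_zero]

/-- `exp (c log (1 + u))` is the power series `(1 + u) ^ c`. -/
theorem one_add_mul_derivative_exp_subst {u : A⟦X⟧} (hu : constantCoeff u = 0) (c : A) :
    (1 + u) * d⁄dX A ((exp A).subst (C c * (log A).subst u)) =
      C c * d⁄dX A u * (exp A).subst (C c * (log A).subst u) := by
  rw [derivative_subst (HasSubst.of_constantCoeff_zero' (constantCoeff_C_mul_subst_log hu c)),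
    derivative_exp, derivative_C_mul, derivative_subst (HasSubst.of_constantCoeff_zero' hu)]
  linear_combination (C c * d⁄dX A u * (exp A).subst (C c * (log A).subst u)) *
    one_add_mul_subst_derivative_log hu

end Subst

end PowerSeries

theorem compS_eq_subst (f : ℝ⟦X⟧) {g : ℝ⟦X⟧} (hg : constantCoeff g = 0) :
    compS f g = f.subst g := by
  ext n
  rw [compS, coeff_mk, coeff_subst' (HasSubst.of_constantCoeff_zero' hg),
    finsum_eq_sum_of_support_subset (s := range (n + 1))]
  · simp [smul_eq_mul]
  · intro d hd
    simp only [Function.mem_support, smul_eq_mul, coe_range, Set.mem_Iio] at hd ⊢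
    by_contra! h
    exact hd (by rw [X_pow_dvd_iff.1 (pow_dvd_pow_of_dvd (X_dvd_iff.2 hg) d) n (by omega), mul_zero])

theorem constantCoeff_compS (f g : ℝ⟦X⟧) : constantCoeff (compS f g) = constantCoeff f := by
  rw [← coeff_zero_eq_constantCoeff_apply, ← coeff_zero_eq_constantCoeff_apply, compS, coeff_mk]
  simp

theorem logS_eq_log : logS = log ℝ := by
  ext n
  simp [logS]

theorem onePow_eq_binomialSeries (a : ℝ) : onePow a = PowerSeries.binomialSeries ℝ a := by
  ext n
  rw [onePow, coeff_mk, binomialSeries_coeff, Ring.choose_eq_smul, smul_eq_mul, smul_eq_mul,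
    mul_one, ← Polynomial.aeval_eq_smeval, Polynomial.aeval_def, ← Polynomial.eval_map,
    descPochhammer_map, div_eq_inv_mul]

theorem constantCoeff_onePow (a : ℝ) : constantCoeff (onePow a) = 1 := by
  simp [onePow_eq_binomialSeries]

theorem onePow_add (a b : ℝ) : onePow (a + b) = onePow a * onePow b := by
  simp only [onePow_eq_binomialSeries, binomialSeries_add]

theorem derivative_onePow (a : ℝ) : d⁄dX ℝ (onePow a) = C a * onePow (a - 1) := by
  ext n
  simp only [coeff_derivative, coeff_C_mul, onePow, coeff_mk, descPochhammer_succ_left,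
    Polynomial.eval_mul, Polynomial.eval_comp, Polynomial.eval_X, Polynomial.eval_sub,
    Polynomial.eval_one, Nat.factorial_succ]
  push_cast
  field_simp

theorem constantCoeff_Lif (k : ℤ) : constantCoeff (Lif k) = 1 := by
  simp [Lif, ← coeff_zero_eq_constantCoeff_apply]

theorem X_mul_derivative_Lif (k : ℤ) : X * d⁄dX ℝ (Lif k) = Lif (k - 1) - Lif k := by
  ext (_ | n)
  · simp [Lif]
  · rw [coeff_succ_X_mul, coeff_derivative, map_sub]
    simp only [Lif, coeff_mk, Nat.factorial_succ]
    have hb : ((n : ℝ) + 1 + 1) ≠ 0 := by positivity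
    push_cast
    rw [zpow_sub_one₀ hb]
    field_simp
    ring

theorem constantCoeff_onePow_sub_one (a : ℝ) :
    constantCoeff (C (1 / 2 : ℝ) * (onePow a - 1)) = 0 := by
  rw [map_mul, map_sub, constantCoeff_onePow, map_one, sub_self, mul_zero]

theorem peters_eq_subst (lam mu : ℝ) :
    peters lam mu = C ((2 : ℝ) ^ (-mu)) *
      (exp ℝ).subst (C (-mu) * (log ℝ).subst (C (1 / 2 : ℝ) * (onePow lam - 1))) := by
  have hu := constantCoeff_onePow_sub_one lam
  rw [peters, compS_eq_subst _ hu, logS_eq_log,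
    compS_eq_subst _ (constantCoeff_C_mul_subst_log hu _)]

theorem constantCoeff_peters (lam mu : ℝ) : constantCoeff (peters lam mu) = 2 ^ (-mu) := by
  rw [peters, map_mul, constantCoeff_C, constantCoeff_compS, constantCoeff_exp, mul_one]

theorem one_add_onePow_ne_zero (lam : ℝ) : 1 + onePow lam ≠ 0 := fun h => by
  simpa [constantCoeff_onePow] using congrArg constantCoeff h

theorem one_add_onePow_mul_derivative_peters (lam mu : ℝ) :
    (1 + onePow lam) * d⁄dX ℝ (peters lam mu) =
      C (-(mu * lam)) * onePow (lam - 1) * peters lam mu := by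
  have hE := one_add_mul_derivative_exp_subst (constantCoeff_onePow_sub_one lam) (-mu)
  rw [derivative_C_mul, map_sub, derivative_onePow, derivative_one, sub_zero] at hE
  have hhalf : (2 : ℝ⟦X⟧) * C (1 / 2 : ℝ) = 1 := by rw [← map_ofNat C 2, ← map_mul]; norm_num
  have hC : C (-(mu * lam)) = C (-mu) * C lam := by rw [← map_mul]; ring_nf
  rw [peters_eq_subst, derivative_C_mul, hC]
  set E := (exp ℝ).subst (C (-mu) * (log ℝ).subst (C (1 / 2 : ℝ) * (onePow lam - 1)))
  linear_combination (2 * C ((2 : ℝ) ^ (-mu))) * hE + C ((2 : ℝ) ^ (-mu)) *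
    (C (-mu) * C lam * onePow (lam - 1) * E - (onePow lam - 1) * d⁄dX ℝ E) * hhalf

theorem peters_eq_one_add_onePow_mul (lam mu : ℝ) :
    peters lam mu = (1 + onePow lam) * peters lam (mu + 1) := by
  have hpos : (0 : ℝ) < 2 := two_pos
  refine eq_of_mul_derivative_eq_mul (one_add_onePow_ne_zero lam)
    (B := C (-(mu * lam)) * onePow (lam - 1)) ?_ ?_ ?_ ?_
  · simp only [map_mul, map_add, map_one, constantCoeff_onePow, constantCoeff_peters]
    positivity
  · rw [one_add_onePow_mul_derivative_peters, mul_assoc]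
  · have hC : C (-(mu * lam)) = C (-((mu + 1) * lam)) + C lam := by rw [← map_add]; ring_nf
    rw [Derivation.leibniz, smul_eq_mul, smul_eq_mul, map_add, derivative_one, zero_add,
      derivative_onePow, hC]
    linear_combination (1 + onePow lam) * one_add_onePow_mul_derivative_peters lam (mu + 1)
  · rw [map_mul, map_add, map_one, constantCoeff_onePow, constantCoeff_peters,
      constantCoeff_peters, neg_add, Real.rpow_add hpos, Real.rpow_neg_one]
    ring

theorem derivative_peters (lam mu : ℝ) :
    d⁄dX ℝ (peters lam mu) = C (-(mu * lam)) * onePow (lam - 1) * peters lam (mu + 1) := by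
  refine mul_left_cancel₀ (one_add_onePow_ne_zero lam) ?_
  rw [one_add_onePow_mul_derivative_peters, peters_eq_one_add_onePow_mul lam mu]
  ring

/-- `t / ((1 + t) log (1 + t))`, the exponential generating function of `cauchyHat`. -/
def cauchyHatSeries : ℝ⟦X⟧ := (mk fun j => coeff (j + 1) ((1 + X) * logS))⁻¹

theorem X_mul_derivative_compS_Lif_logS (k : ℤ) :
    X * d⁄dX ℝ (compS (Lif k) logS) =
      cauchyHatSeries * (compS (Lif (k - 1)) logS - compS (Lif k) logS) := by
  simp only [cauchyHatSeries, logS_eq_log, compS_eq_subst _ constantCoeff_log]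
  rw [derivative_subst HasSubst.log, ← subst_sub HasSubst.log, ← X_mul_derivative_Lif,
    subst_X_mul constantCoeff_log]
  set S : ℝ⟦X⟧ := mk fun j => coeff (j + 1) ((1 + X) * log ℝ)
  have hXS : X * S = (1 + X) * log ℝ := by
    rw [← sub_const_eq_X_mul_shift]
    simp
  have hS : S * S⁻¹ = 1 := PowerSeries.mul_inv_cancel S (by simp [S, add_mul, coeff_succ_X_mul])
  set a := (d⁄dX ℝ (Lif k)).subst (log ℝ)
  linear_combination (-X * a * d⁄dX ℝ (log ℝ)) * hS + (a * d⁄dX ℝ (log ℝ) * S⁻¹) * hXS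
    + (log ℝ * a * S⁻¹) * one_add_X_mul_derivative_log (A := ℝ)

def cpSeries (k : ℤ) (lam mu x : ℝ) : ℝ⟦X⟧ := peters lam mu * compS (Lif k) logS * onePow (-x)

theorem constantCoeff_cpSeries (k : ℤ) (lam mu x : ℝ) :
    constantCoeff (cpSeries k lam mu x) = 2 ^ (-mu) := by
  simp only [cpSeries, map_mul, constantCoeff_peters, constantCoeff_compS, constantCoeff_Lif,
    constantCoeff_onePow, mul_one]

theorem X_mul_derivative_cpSeries (k : ℤ) (lam mu x : ℝ) :
    X * d⁄dX ℝ (cpSeries k lam mu x) =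
      X * (C (-(mu * lam)) * cpSeries k lam (mu + 1) (x - lam + 1)
          + C (-x) * cpSeries k lam mu (x + 1))
        + cauchyHatSeries * (cpSeries (k - 1) lam mu x - cpSeries k lam mu x) := by
  have hshift : onePow (lam - 1) * onePow (-x) = onePow (-(x - lam + 1)) := by
    rw [← onePow_add]; ring_nf
  simp only [cpSeries, Derivation.leibniz, smul_eq_mul, derivative_peters, derivative_onePow,
    show -x - 1 = -(x + 1) by ring]
  linear_combination (peters lam mu * onePow (-x)) * X_mul_derivative_compS_Lif_logS k
    + (C (-(mu * lam)) * X * peters lam (mu + 1) * compS (Lif k) logS) * hshift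

section Coefficients

open Nat

theorem factorial_mul_coeff_succ_X_mul_derivative (F : ℝ⟦X⟧) (m : ℕ) :
    (m ! : ℝ) * coeff (m + 1) (X * d⁄dX ℝ F) = (m + 1)! * coeff (m + 1) F := by
  rw [coeff_succ_X_mul, coeff_derivative, factorial_succ]
  push_cast
  ring

theorem factorial_mul_coeff_mul {g : ℝ⟦X⟧} (hg : constantCoeff g = 0) (f : ℝ⟦X⟧) (n : ℕ) :
    (n ! : ℝ) * coeff n (f * g) =
      ∑ l ∈ range n, (n.choose (l + 1) : ℝ) * ((n - 1 - l)! * coeff (n - 1 - l) f) *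
        ((l + 1)! * coeff (l + 1) g) := by
  rw [coeff_mul, ← Finset.Nat.sum_antidiagonal_swap]
  simp only [Prod.fst_swap, Prod.snd_swap]
  rw [Finset.Nat.sum_antidiagonal_eq_sum_range_succ (fun j i => coeff i f * coeff j g),
    sum_range_succ', coeff_zero_eq_constantCoeff_apply, hg, mul_zero, add_zero, mul_sum]
  refine sum_congr rfl fun l hl => ?_
  have hchoose : (n.choose (l + 1) : ℝ) * (l + 1)! * (n - (l + 1))! = n ! := by
    exact_mod_cast Nat.choose_mul_factorial_mul_factorial (mem_range.1 hl)
  rw [Nat.sub_sub, add_comm 1 l]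
  linear_combination (coeff (n - (l + 1)) f * coeff (l + 1) g) * hchoose.symm

end Coefficients

theorem CP_recurrence (k : ℤ) (lam mu x : ℝ) (n : ℕ) (hn : 0 < n) :
    CP k lam mu x n =
      -(mu * lam) * CP k lam (mu + 1) (x - lam + 1) (n - 1)
        - x * CP k lam mu (x + 1) (n - 1)
        + (1 / (n : ℝ)) *
            ∑ l ∈ Finset.range n,
              (n.choose (l + 1) : ℝ) * cauchyHat (n - 1 - l) *
                (CP (k - 1) lam mu x (l + 1) - CP k lam mu x (l + 1)) := by
  obtain ⟨m, rfl⟩ := Nat.exists_eq_add_one_of_ne_zero hn.ne'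
  have hD : constantCoeff (cpSeries (k - 1) lam mu x - cpSeries k lam mu x) = 0 := by
    rw [map_sub, constantCoeff_cpSeries, constantCoeff_cpSeries, sub_self]
  have hconv : ((m + 1).factorial : ℝ) *
      coeff (m + 1) (cauchyHatSeries * (cpSeries (k - 1) lam mu x - cpSeries k lam mu x)) =
      ∑ l ∈ range (m + 1), ((m + 1).choose (l + 1) : ℝ) * cauchyHat (m - l) *
        (CP (k - 1) lam mu x (l + 1) - CP k lam mu x (l + 1)) := by
    rw [factorial_mul_coeff_mul hD, Nat.add_sub_cancel]
    simp only [map_sub, mul_sub]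
    rfl
  calc CP k lam mu x (m + 1)
      = m.factorial * coeff (m + 1) (X * d⁄dX ℝ (cpSeries k lam mu x)) :=
        (factorial_mul_coeff_succ_X_mul_derivative _ m).symm
    _ = -(mu * lam) * CP k lam (mu + 1) (x - lam + 1) m - x * CP k lam mu (x + 1) m
          + 1 / ((m + 1 : ℕ) : ℝ) * ((m + 1).factorial *
            coeff (m + 1) (cauchyHatSeries * (cpSeries (k - 1) lam mu x - cpSeries k lam mu x))) := by
        rw [X_mul_derivative_cpSeries, map_add, coeff_succ_X_mul, map_add, coeff_C_mul,
          coeff_C_mul, Nat.factorial_succ]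
        simp only [CP, cpSeries]
        push_cast
        field_simp
        ring
    _ = _ := by rw [hconv, Nat.add_sub_cancel]
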